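/- Let m ≥ 1, let p : Fin (m+1) → ℝ^m be affinely independent, and let x lie in the convex hull of {p_0, …, p_m}. With the volume-ratio weights w_j = A(Function.update p j x) / A(p), the point x is reproduced as the convex combination x = ∑_{j=0}^{m} w_j • p_j. -/

import Mathlib

open MeasureTheory

/-- The `m`-dimensional volume of the convex hull of the range of a family of points
in `ℝ^m` (the "area" `A(p)` of the simplex with vertices `p`). -/
noncomputable def simVol {m : ℕ} (p : Fin (m + 1) → EuclideanSpace ℝ (Fin m)) : ℝ :=
  (volume (convexHull ℝ (Set.range p))).toReal

/-!
Let `λ_j` be the barycentric coordinates of the simplex `p`. The affine shear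
`y ↦ y + λ_j y • (x - p_j)` fixes every vertex `p_i` with `i ≠ j` and sends `p_j` to `x`, so it
maps the simplex onto the one with `p_j` replaced by `x`. Its linear part is the identity plus a
rank-one map, with determinant `1 + λ_j x - λ_j p_j = λ_j x`; hence the volume ratio is
`|λ_j x| = λ_j x` for `x` in the simplex, and the claim is `x = ∑ j, λ_j x • p_j`.
-/

open Set

theorem LinearMap.det_id_add_smulRight {R M : Type*} [CommRing R] [AddCommGroup M] [Module R M]
    [Module.Free R M] [Module.Finite R M] (f : M →ₗ[R] R) (v : M) :
    (LinearMap.id + f.smulRight v).det = 1 + f v := by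
  let b := Module.Free.chooseBasis R M
  classical
  rw [← LinearMap.det_toMatrix b, map_add, LinearMap.toMatrix_id, LinearMap.toMatrix_smulRight,
    Matrix.vecMulVec_eq Unit, Matrix.det_one_add_replicateCol_mul_replicateRow]
  congr 1
  conv_rhs => rw [← b.sum_repr v]
  simp only [map_sum, map_smul, smul_eq_mul, dotProduct, Function.comp_apply, mul_comm]

theorem MeasureTheory.Measure.addHaar_image_affineMap {E : Type*} [NormedAddCommGroup E]
    [NormedSpace ℝ E] [MeasurableSpace E] [BorelSpace E] [FiniteDimensional ℝ E]
    (μ : Measure E) [μ.IsAddHaarMeasure] (f : E →ᵃ[ℝ] E) (s : Set E) :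
    μ (f '' s) = ENNReal.ofReal |f.linear.det| * μ s := by
  have hf : ⇑f = (f 0 +ᵥ ·) ∘ f.linear := by
    rw [f.decomp]; ext y; simp [add_comm]
  rw [hf, Set.image_comp, Set.image_vadd, measure_vadd, addHaar_image_linearMap]

namespace AffineBasis

variable {ι k V : Type*} [Field k] [AddCommGroup V] [Module k V]

noncomputable def vertexShear (b : AffineBasis ι k V) (j : ι) (x : V) : V →ᵃ[k] V :=
  AffineMap.id k V + (LinearMap.toSpanSingleton k V (x - b j)).toAffineMap.comp (b.coord j)

variable (b : AffineBasis ι k V) (j : ι) (x : V)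

theorem vertexShear_apply (y : V) : b.vertexShear j x y = y + b.coord j y • (x - b j) := rfl

theorem vertexShear_comp [DecidableEq ι] : b.vertexShear j x ∘ b = Function.update b j x := by
  ext i : 1
  rcases eq_or_ne i j with rfl | hij
  · simp [vertexShear_apply]
  · simp [vertexShear_apply, b.coord_apply_ne hij.symm, hij]

theorem det_vertexShear_linear [FiniteDimensional k V] :
    (b.vertexShear j x).linear.det = b.coord j x := by
  have : (b.vertexShear j x).linear = LinearMap.id + (b.coord j).linear.smulRight (x - b j) := by
    ext; simp [vertexShear]
  rw [this, LinearMap.det_id_add_smulRight, ← vsub_eq_sub, AffineMap.linearMap_vsub,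
    b.coord_apply_eq, vsub_eq_sub]
  ring

section Volume

variable {ι E : Type*} [NormedAddCommGroup E] [NormedSpace ℝ E] [MeasurableSpace E]
  (μ : Measure E) [μ.IsAddHaarMeasure] (b : AffineBasis ι ℝ E)

theorem addHaar_convexHull_update [BorelSpace E] [FiniteDimensional ℝ E] [DecidableEq ι]
    (j : ι) (x : E) :
    μ (convexHull ℝ (range (Function.update b j x)))
      = ENNReal.ofReal |b.coord j x| * μ (convexHull ℝ (range b)) := by
  rw [← b.vertexShear_comp, range_comp, ← AffineMap.image_convexHull,
    Measure.addHaar_image_affineMap, det_vertexShear_linear]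

theorem addHaar_convexHull_pos [Fintype ι] : 0 < μ (convexHull ℝ (range b)) :=
  μ.measure_pos_of_nonempty_interior ⟨_, b.centroid_mem_interior_convexHull⟩

theorem addHaar_convexHull_lt_top [Finite ι] : μ (convexHull ℝ (range b)) < ⊤ :=
  ((finite_range b).isCompact_convexHull (𝕜 := ℝ)).measure_lt_top

theorem addHaar_convexHull_update_div_eq_coord [BorelSpace E] [FiniteDimensional ℝ E] [Fintype ι]
    [DecidableEq ι] (j : ι) {x : E} (hx : x ∈ convexHull ℝ (range b)) :
    (μ (convexHull ℝ (range (Function.update b j x)))).toReal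
      / (μ (convexHull ℝ (range b))).toReal = b.coord j x := by
  have hcoord : 0 ≤ b.coord j x := by
    rw [b.convexHull_eq_nonneg_coord] at hx
    exact hx j
  have hvol : (μ (convexHull ℝ (range b))).toReal ≠ 0 :=
    ENNReal.toReal_ne_zero.2
      ⟨(b.addHaar_convexHull_pos μ).ne', (b.addHaar_convexHull_lt_top μ).ne⟩
  rw [b.addHaar_convexHull_update μ, ENNReal.toReal_mul, ENNReal.toReal_ofReal (abs_nonneg _),
    abs_of_nonneg hcoord, mul_div_cancel_right₀ _ hvol]

end Volume

end AffineBasis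

theorem point_eq_barycentric_combination_general {m : ℕ}
    (p : Fin (m + 1) → EuclideanSpace ℝ (Fin m)) (hp : AffineIndependent ℝ p)
    (x : EuclideanSpace ℝ (Fin m)) (hx : x ∈ convexHull ℝ (Set.range p)) :
    x = ∑ j : Fin (m + 1), (simVol (Function.update p j x) / simVol p) • p j := by
  have hspan : affineSpan ℝ (Set.range p) = ⊤ := by
    rw [hp.affineSpan_eq_top_iff_card_eq_finrank_add_one]
    simp
  let b : AffineBasis (Fin (m + 1)) ℝ (EuclideanSpace ℝ (Fin m)) := ⟨p, hp, hspan⟩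
  calc x = ∑ j, b.coord j x • p j := (b.linear_combination_coord_eq_self x).symm
    _ = _ := Finset.sum_congr rfl fun j _ => by
      rw [← b.addHaar_convexHull_update_div_eq_coord volume j hx]
      rfl

/-- The reparameterization underlying the DILOC update (Eq. (18)): a point inside a
simplex is the convex combination of the vertices weighted by the volume-ratio
barycentric coordinates. -/
theorem point_eq_barycentric_combination {m : ℕ} (hm : 1 ≤ m)
    (p : Fin (m + 1) → EuclideanSpace ℝ (Fin m)) (hp : AffineIndependent ℝ p)
    (x : EuclideanSpace ℝ (Fin m)) (hx : x ∈ convexHull ℝ (Set.range p)) :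
    x = ∑ j : Fin (m + 1), (simVol (Function.update p j x) / simVol p) • p j :=
  point_eq_barycentric_combination_general p hp x hx
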